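/- arXiv:1701.07785 — 5 statements merged into one kernel-verified Lean document; each statement's English description precedes it below -/
import Mathlib

section
/- Let x ∈ (0,1], y ∈ [0,1], and let w be a real number. There exists a probability space (Ω, μ) and events A, B ⊆ Ω with μ(A) = x, μ(B) = y and μ[B|A] = w if and only if max((x + y − 1)/x, 0) ≤ w ≤ min(y/x, 1). (These are the lower and upper bounds for the conclusion B|A of two-premise centering from premises A and B.) -/
open MeasureTheory ProbabilityTheory

/-- Lower and upper bounds for the conclusion `B|A` of two-premise centering from
premises `A` and `B`: for `x ∈ (0,1]` and `y ∈ [0,1]`, a probability space with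
`μ(A) = x`, `μ(B) = y` and `μ[B|A] = w` exists iff
`max ((x + y - 1)/x) 0 ≤ w ≤ min (y/x) 1`. -/
theorem two_premise_centering_bounds (x y w : ℝ)
    (hx : x ∈ Set.Ioc (0 : ℝ) 1) (hy : y ∈ Set.Icc (0 : ℝ) 1) :
    (∃ (Ω : Type) (_ : MeasurableSpace Ω) (μ : Measure Ω) (_ : IsProbabilityMeasure μ)
        (A B : Set Ω), MeasurableSet A ∧ MeasurableSet B ∧
        (μ A).toReal = x ∧ (μ B).toReal = y ∧
        ((ProbabilityTheory.cond μ A) B).toReal = w) ↔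
      (max ((x + y - 1) / x) 0 ≤ w ∧ w ≤ min (y / x) 1) := by
  obtain ⟨hx0, hx1⟩ := hx
  obtain ⟨hy0, hy1⟩ := hy
  constructor
  · rintro ⟨Ω, mΩ, μ, hμ, A, B, hA, hB, hμA, hμB, hw⟩
    have hAT : μ A ≠ ⊤ := measure_ne_top μ A
    have hBT : μ B ≠ ⊤ := measure_ne_top μ B
    have hIT : μ (A ∩ B) ≠ ⊤ := measure_ne_top μ _
    have hUT : μ (A ∪ B) ≠ ⊤ := measure_ne_top μ _
    set p := (μ (A ∩ B)).toReal with hp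
    have hp0 : 0 ≤ p := ENNReal.toReal_nonneg
    have hpx : p ≤ x := by
      rw [← hμA]; exact ENNReal.toReal_mono hAT (measure_mono Set.inter_subset_left)
    have hpy : p ≤ y := by
      rw [← hμB]; exact ENNReal.toReal_mono hBT (measure_mono Set.inter_subset_right)
    have hkey : (μ (A ∪ B)).toReal + p = x + y := by
      rw [hp, ← hμA, ← hμB, ← ENNReal.toReal_add hUT hIT, ← ENNReal.toReal_add hAT hBT,
        measure_union_add_inter A hB]
    have hU1 : (μ (A ∪ B)).toReal ≤ 1 := by
      have := prob_le_one (μ := μ) (s := A ∪ B)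
      simpa using ENNReal.toReal_mono (by simp) this
    have hplb : x + y - 1 ≤ p := by linarith
    have hwp : w = p / x := by
      rw [← hw, cond_apply hA μ B, ENNReal.toReal_mul, ENNReal.toReal_inv, hμA, hp]
      ring
    constructor
    · rw [max_le_iff, hwp]
      constructor
      · exact div_le_div_of_nonneg_right hplb hx0.le
      · positivity
    · rw [le_min_iff, hwp]
      exact ⟨div_le_div_of_nonneg_right hpy hx0.le, (div_le_one hx0).2 hpx⟩
  · rintro ⟨h1, h2⟩
    rw [max_le_iff] at h1
    rw [le_min_iff] at h2
    obtain ⟨h1a, h1b⟩ := h1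
    obtain ⟨h2a, h2b⟩ := h2
    set p := w * x with hpdef
    have hp0 : 0 ≤ p := mul_nonneg h1b hx0.le
    have hpx : p ≤ x := by nlinarith
    have hpy : p ≤ y := by nlinarith [(le_div_iff₀ hx0).mp h2a]
    have hplb : x + y - 1 ≤ p := by nlinarith [(div_le_iff₀ hx0).mp h1a]
    have hq0 : 0 ≤ 1 - x - y + p := by linarith
    set μ : Measure (Fin 4) := ENNReal.ofReal p • Measure.dirac 0
      + ENNReal.ofReal (x - p) • Measure.dirac 1
      + ENNReal.ofReal (y - p) • Measure.dirac 2
      + ENNReal.ofReal (1 - x - y + p) • Measure.dirac 3 with hμdef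
    have h01 : μ ({0, 1} : Set (Fin 4)) = ENNReal.ofReal x := by
      simp only [hμdef, Measure.add_apply, Measure.smul_apply, smul_eq_mul,
        MeasureTheory.Measure.dirac_apply, Set.indicator_apply]
      simp only [show ((0:Fin 4) ∈ ({0,1} : Set (Fin 4))) = True by simp,
        show ((1:Fin 4) ∈ ({0,1} : Set (Fin 4))) = True by simp,
        show ((2:Fin 4) ∈ ({0,1} : Set (Fin 4))) = False by simp,
        show ((3:Fin 4) ∈ ({0,1} : Set (Fin 4))) = False by simp,
        if_true, if_false, Pi.one_apply, mul_one, mul_zero, add_zero]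
      rw [← ENNReal.ofReal_add hp0 (by linarith)]
      norm_num
    have h02 : μ ({0, 2} : Set (Fin 4)) = ENNReal.ofReal y := by
      simp only [hμdef, Measure.add_apply, Measure.smul_apply, smul_eq_mul,
        MeasureTheory.Measure.dirac_apply, Set.indicator_apply]
      simp only [show ((0:Fin 4) ∈ ({0,2} : Set (Fin 4))) = True by simp,
        show ((1:Fin 4) ∈ ({0,2} : Set (Fin 4))) = False by simp,
        show ((2:Fin 4) ∈ ({0,2} : Set (Fin 4))) = True by simp,
        show ((3:Fin 4) ∈ ({0,2} : Set (Fin 4))) = False by simp,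
        if_true, if_false, Pi.one_apply, mul_one, mul_zero, add_zero, zero_add]
      rw [← ENNReal.ofReal_add hp0 (by linarith)]
      norm_num
    have h0 : μ ({0} : Set (Fin 4)) = ENNReal.ofReal p := by
      simp only [hμdef, Measure.add_apply, Measure.smul_apply, smul_eq_mul,
        MeasureTheory.Measure.dirac_apply, Set.indicator_apply]
      simp only [show ((0:Fin 4) ∈ ({0} : Set (Fin 4))) = True by simp,
        show ((1:Fin 4) ∈ ({0} : Set (Fin 4))) = False by simp,
        show ((2:Fin 4) ∈ ({0} : Set (Fin 4))) = False by simp,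
        show ((3:Fin 4) ∈ ({0} : Set (Fin 4))) = False by simp,
        if_true, if_false, Pi.one_apply, mul_one, mul_zero, add_zero]
    have huniv : μ (Set.univ : Set (Fin 4)) = 1 := by
      simp only [hμdef, Measure.add_apply, Measure.smul_apply, smul_eq_mul,
        MeasureTheory.Measure.dirac_apply, Set.indicator_univ, Pi.one_apply, mul_one]
      rw [← ENNReal.ofReal_add hp0 (by linarith),
        ← ENNReal.ofReal_add (by linarith) (by linarith),
        ← ENNReal.ofReal_add (by linarith) hq0]
      rw [show p + (x - p) + (y - p) + (1 - x - y + p) = 1 by ring]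
      norm_num
    refine ⟨Fin 4, inferInstance, μ, ⟨huniv⟩, ({0, 1} : Set (Fin 4)), ({0, 2} : Set (Fin 4)),
      .of_discrete, .of_discrete, ?_, ?_, ?_⟩
    · rw [h01, ENNReal.toReal_ofReal hx0.le]
    · rw [h02, ENNReal.toReal_ofReal (by linarith)]
    · rw [cond_apply MeasurableSet.of_discrete]
      have hI : ({0, 1} : Set (Fin 4)) ∩ {0, 2} = {0} := by
        ext i; fin_cases i <;> simp
      rw [hI, h01, h0, ENNReal.toReal_mul, ENNReal.toReal_inv, ENNReal.toReal_ofReal hx0.le,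
        ENNReal.toReal_ofReal hp0, hpdef]
      field_simp
end

section
/- Let μ be a probability measure and A, B events with μ(A) > 0 and μ(B) > 0. Put x = μ[A|B] and y = μ[B|A]. Then μ[A ∩ B | A ∪ B] = 0 if x = 0 or y = 0, and μ[A ∩ B | A ∪ B] = x·y/(x + y − x·y) if x > 0 and y > 0. (The probability of the biconditional event A||B = (A∩B)|(A∪B) is the Hamacher t-norm, with parameter λ = 0, of the probabilities of the two conditionals A|B and B|A.) -/
open MeasureTheory ProbabilityTheory

/-!
Write `a = μ A`, `b = μ B`, `i = μ (A ∩ B)`. Then `x = i / b`, `y = i / a`, and by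
inclusion–exclusion `μ[A ∩ B | A ∪ B] = i / (a + b - i)`. Since
`x + y - x * y = i * (a + b - i) / (a * b)`, this is exactly the Hamacher product of `x` and `y`.
-/

noncomputable def hamacherProduct (x y : ℝ) : ℝ := x * y / (x + y - x * y)

lemma hamacherProduct_div_div {a b i : ℝ} (ha : a ≠ 0) (hb : b ≠ 0) :
    hamacherProduct (i / b) (i / a) = i / (a + b - i) := by
  rcases eq_or_ne i 0 with rfl | hi
  · simp [hamacherProduct]
  have hden : i / b + i / a - i / b * (i / a) = i * (a + b - i) / (a * b) := by
    field_simp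
  rw [hamacherProduct, hden, div_div_eq_mul_div]
  field_simp

lemma ProbabilityTheory.cond_toReal_apply {Ω : Type*} [MeasurableSpace Ω] (μ : Measure Ω)
    {s : Set Ω} (hs : MeasurableSet s) (t : Set Ω) :
    (μ[t|s]).toReal = μ.real (s ∩ t) / μ.real s := by
  rw [cond_apply hs, ENNReal.toReal_mul, ENNReal.toReal_inv, inv_mul_eq_div, measureReal_def,
    measureReal_def]

lemma ProbabilityTheory.cond_union_inter_toReal {Ω : Type*} [MeasurableSpace Ω] (μ : Measure Ω)
    [IsFiniteMeasure μ] {A B : Set Ω} (hA : MeasurableSet A) (hB : MeasurableSet B) :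
    (μ[A ∩ B|A ∪ B]).toReal = μ.real (A ∩ B) / (μ.real A + μ.real B - μ.real (A ∩ B)) := by
  rw [cond_toReal_apply μ (hA.union hB),
    Set.inter_eq_self_of_subset_right (Set.inter_subset_left.trans Set.subset_union_left),
    ← measureReal_union_add_inter (μ := μ) (s := A) hB, add_sub_cancel_right]

/-- The probability of the biconditional event `A||B = (A ∩ B)|(A ∪ B)` is the
Hamacher t-norm (parameter `λ = 0`) of `x = μ[A|B]` and `y = μ[B|A]`:
it is `0` if `x = 0` or `y = 0`, and `x·y/(x + y − x·y)` if `x > 0` and `y > 0`. -/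
theorem biconditional_hamacher {Ω : Type*} [MeasurableSpace Ω]
    (μ : Measure Ω) [IsProbabilityMeasure μ] (A B : Set Ω)
    (hA : MeasurableSet A) (hB : MeasurableSet B)
    (hApos : 0 < μ A) (hBpos : 0 < μ B)
    (x y : ℝ)
    (hx : x = ((ProbabilityTheory.cond μ B) A).toReal)
    (hy : y = ((ProbabilityTheory.cond μ A) B).toReal) :
    ((x = 0 ∨ y = 0) → ((ProbabilityTheory.cond μ (A ∪ B)) (A ∩ B)).toReal = 0) ∧
    (0 < x → 0 < y →
      ((ProbabilityTheory.cond μ (A ∪ B)) (A ∩ B)).toReal = x * y / (x + y - x * y)) := by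
  have ha : μ.real A ≠ 0 := (measureReal_ne_zero_iff).mpr hApos.ne'
  have hb : μ.real B ≠ 0 := (measureReal_ne_zero_iff).mpr hBpos.ne'
  have hx' : x = μ.real (A ∩ B) / μ.real B := by rw [hx, cond_toReal_apply μ hB, Set.inter_comm]
  have hy' : y = μ.real (A ∩ B) / μ.real A := by rw [hy, cond_toReal_apply μ hA]
  rw [cond_union_inter_toReal μ hA hB]
  refine ⟨fun hxy => ?_, fun _ _ => ?_⟩
  · have hi : μ.real (A ∩ B) = 0 := by
      rcases hxy with h | h
      · simpa [hx', hb] using h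
      · simpa [hy', ha] using h
    simp [hi]
  · rw [hx', hy']
    exact (hamacherProduct_div_div ha hb).symm
end

section
/- Let μ be a probability measure and A, B events with μ(A) > 0 and μ(B) > 0, and suppose z := μ[A ∩ B | A ∪ B] > 0. Then, setting x = μ[A|B], one has z ≤ x ≤ 1 and μ[B|A] = x·z/(x − z + x·z). (Reversed inference: the premises A|B and B|A of the biconditional AND rule are determined, up to the one-parameter family y = xz/(x − z + xz) with x ∈ [z, 1], by the value z assessed on the conclusion A||B.) -/
open MeasureTheory ProbabilityTheory

/-- Reversed inference from the biconditional event `A||B` to its premises: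
if `z = μ[A ∩ B | A ∪ B] > 0` and `x = μ[A|B]`, then `z ≤ x ≤ 1` and
`μ[B|A] = x·z/(x − z + x·z)`. -/
theorem biconditional_reversed_inference {Ω : Type*} [MeasurableSpace Ω]
    (μ : Measure Ω) [IsProbabilityMeasure μ] (A B : Set Ω)
    (hA : MeasurableSet A) (hB : MeasurableSet B)
    (hApos : 0 < μ A) (hBpos : 0 < μ B)
    (z : ℝ) (hz : z = ((ProbabilityTheory.cond μ (A ∪ B)) (A ∩ B)).toReal)
    (hzpos : 0 < z)
    (x : ℝ) (hx : x = ((ProbabilityTheory.cond μ B) A).toReal) :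
    z ≤ x ∧ x ≤ 1 ∧
      ((ProbabilityTheory.cond μ A) B).toReal = x * z / (x - z + x * z) := by
  set p : ℝ := (μ (A ∩ B)).toReal with hp
  set a : ℝ := (μ A).toReal with ha
  set b : ℝ := (μ B).toReal with hb
  set u : ℝ := (μ (A ∪ B)).toReal with hu
  have hAfin : μ A ≠ ⊤ := measure_ne_top μ A
  have hBfin : μ B ≠ ⊤ := measure_ne_top μ B
  have hUfin : μ (A ∪ B) ≠ ⊤ := measure_ne_top μ _
  have hIfin : μ (A ∩ B) ≠ ⊤ := measure_ne_top μ _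
  have hUpos : 0 < μ (A ∪ B) := lt_of_lt_of_le hApos (measure_mono Set.subset_union_left)
  have hapos : 0 < a := ENNReal.toReal_pos hApos.ne' hAfin
  have hbpos : 0 < b := ENNReal.toReal_pos hBpos.ne' hBfin
  have hupos : 0 < u := ENNReal.toReal_pos hUpos.ne' hUfin
  have hzval : z = p / u := by
    rw [hz, ProbabilityTheory.cond_apply (hA.union hB)]
    have : (A ∪ B) ∩ (A ∩ B) = A ∩ B := by
      ext ω; simp [Set.mem_inter_iff, Set.mem_union]; tauto
    rw [this, ENNReal.toReal_mul, ENNReal.toReal_inv]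
    ring
  have hxval : x = p / b := by
    rw [hx, ProbabilityTheory.cond_apply hB, Set.inter_comm B A,
      ENNReal.toReal_mul, ENNReal.toReal_inv]
    ring
  have hyval : ((ProbabilityTheory.cond μ A) B).toReal = p / a := by
    rw [ProbabilityTheory.cond_apply hA, ENNReal.toReal_mul, ENNReal.toReal_inv]
    ring
  have hppos : 0 < p := by
    by_contra h
    push_neg at h
    have : z ≤ 0 := by
      rw [hzval]; exact div_nonpos_of_nonpos_of_nonneg h hupos.le
    linarith
  -- inclusion-exclusion
  have hsum : u + p = a + b := by
    have := measure_union_add_inter (μ := μ) A hB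
    have := congrArg ENNReal.toReal this
    rwa [ENNReal.toReal_add hUfin hIfin, ENNReal.toReal_add hAfin hBfin] at this
  have hble : b ≤ u := by
    have := measure_mono (μ := μ) (Set.subset_union_right (s := A) (t := B))
    exact ENNReal.toReal_le_toReal hBfin hUfin |>.mpr this
  have hpleb : p ≤ b := by
    have := measure_mono (μ := μ) (Set.inter_subset_right (s := A) (t := B))
    exact ENNReal.toReal_le_toReal hIfin hBfin |>.mpr this
  refine ⟨?_, ?_, ?_⟩
  · rw [hzval, hxval]
    exact div_le_div_of_nonneg_left hppos.le hbpos hble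
  · rw [hxval]
    exact (div_le_one hbpos).mpr hpleb
  · rw [hyval, hxval, hzval]
    have hkey : p / b - p / u + p / b * (p / u) = p * a / (b * u) := by
      field_simp
      nlinarith [hsum]
    rw [hkey]
    field_simp
end

section
/- For every z ∈ (0,1] and every x ∈ [z, 1], there exists a probability space (Ω, μ) and events A, B ⊆ Ω with μ(A) > 0, μ(B) > 0, μ[A|B] = x, μ[B|A] = x·z/(x − z + x·z), and μ[A ∩ B | A ∪ B] = z. (Attainability half of the reversed inference from the biconditional event A||B to its premises: every pair (x, y) in the set D_z = {(x, y) : z ≤ x ≤ 1, y = xz/(x − z + xz)} is a coherent extension of the assessment z on A||B.) -/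
open MeasureTheory ProbabilityTheory

/-- Attainability half of the reversed inference from `A||B` to its premises:
for every `z ∈ (0,1]` and `x ∈ [z,1]` there is a probability space with events
`A, B` of positive probability such that `μ[A|B] = x`, `μ[B|A] = xz/(x − z + xz)`
and `μ[A ∩ B | A ∪ B] = z`. -/
theorem biconditional_reversed_inference_attainable (z x : ℝ)
    (hz : z ∈ Set.Ioc (0 : ℝ) 1) (hx : x ∈ Set.Icc z 1) :
    ∃ (Ω : Type) (_ : MeasurableSpace Ω) (μ : Measure Ω) (_ : IsProbabilityMeasure μ)
      (A B : Set Ω), MeasurableSet A ∧ MeasurableSet B ∧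
      0 < μ A ∧ 0 < μ B ∧
      ((ProbabilityTheory.cond μ B) A).toReal = x ∧
      ((ProbabilityTheory.cond μ A) B).toReal = x * z / (x - z + x * z) ∧
      ((ProbabilityTheory.cond μ (A ∪ B)) (A ∩ B)).toReal = z := by
  obtain ⟨hz0, hz1⟩ := hz
  obtain ⟨hzx, hx1⟩ := hx
  have hx0 : 0 < x := lt_of_lt_of_le hz0 hzx
  have hb0 : (0:ℝ) ≤ 1 - z / x := by
    rw [sub_nonneg, div_le_one hx0]; linarith
  have hc0 : (0:ℝ) ≤ z / x - z := by
    rw [sub_nonneg]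
    calc z = z / 1 := by ring
    _ ≤ z / x := by apply div_le_div_of_nonneg_left hz0.le hx0 hx1
  have hzx0 : 0 < z / x := div_pos hz0 hx0
  set a := ENNReal.ofReal z with ha
  set b := ENNReal.ofReal (1 - z / x) with hb
  set c := ENNReal.ofReal (z / x - z) with hc
  set μ : Measure (Fin 3) := a • Measure.dirac 0 + (b • Measure.dirac 1 + c • Measure.dirac 2) with hμ
  have happ : ∀ s : Set (Fin 3), μ s = a * s.indicator 1 0 + (b * s.indicator 1 1 + c * s.indicator 1 2) := by
    intro s
    simp [hμ, Measure.dirac_apply]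
  have hA : μ {0,1} = ENNReal.ofReal (1 - z / x + z) := by
    rw [happ]
    simp [Set.indicator_apply]
    rw [← ENNReal.ofReal_add hz0.le hb0]
    ring_nf
  have hB : μ {0,2} = ENNReal.ofReal (z / x) := by
    rw [happ]
    simp [Set.indicator_apply]
    rw [← ENNReal.ofReal_add hz0.le hc0]
    ring_nf
  have hprob : IsProbabilityMeasure μ := by
    constructor
    rw [happ]
    simp [Set.indicator_apply]
    rw [← ENNReal.ofReal_add hb0 hc0, ← ENNReal.ofReal_add hz0.le (by linarith)]
    have h4 : z + (1 - z / x + (z / x - z)) = 1 := by ring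
    rw [h4, ENNReal.ofReal_one]
  refine ⟨Fin 3, inferInstance, μ, hprob, {0,1}, {0,2}, .of_discrete, .of_discrete, ?_, ?_, ?_, ?_, ?_⟩
  · rw [hA]; exact ENNReal.ofReal_pos.2 (by linarith)
  · rw [hB]; exact ENNReal.ofReal_pos.2 hzx0
  · rw [cond_apply .of_discrete, hB]
    have h1 : ({0,2} : Set (Fin 3)) ∩ {0,1} = {0} := by ext y; fin_cases y <;> simp
    have h2 : μ {0} = a := by rw [happ]; simp [Set.indicator_apply]
    rw [h1, h2, ha]
    rw [← ENNReal.ofReal_inv_of_pos hzx0, ← ENNReal.ofReal_mul (by positivity)]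
    rw [ENNReal.toReal_ofReal (by positivity)]
    field_simp
  · rw [cond_apply .of_discrete, hA]
    have h1 : ({0,1} : Set (Fin 3)) ∩ {0,2} = {0} := by ext y; fin_cases y <;> simp
    have h2 : μ {0} = a := by rw [happ]; simp [Set.indicator_apply]
    have hd : (0:ℝ) < 1 - z / x + z := by linarith
    rw [h1, h2, ha]
    rw [← ENNReal.ofReal_inv_of_pos hd, ← ENNReal.ofReal_mul (by positivity)]
    rw [ENNReal.toReal_ofReal (by positivity)]
    have hden : (0:ℝ) < x - z + x * z := by nlinarith
    rw [inv_mul_eq_div, div_eq_div_iff hd.ne' hden.ne']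
    field_simp
  · have h1 : ({0,1} : Set (Fin 3)) ∪ {0,2} = Set.univ := by ext y; fin_cases y <;> simp
    have h2 : ({0,1} : Set (Fin 3)) ∩ {0,2} = {0} := by ext y; fin_cases y <;> simp
    have h3 : μ {0} = a := by rw [happ]; simp [Set.indicator_apply]
    rw [cond_apply .of_discrete, h1, h2, measure_univ, Set.univ_inter, h3, ha]
    simp [ENNReal.toReal_ofReal hz0.le]
end

section
/- Let x, y ∈ [0,1] with max(x, y) > 0, and let z be a real number. There exists a probability space (Ω, μ) and events A, B ⊆ Ω with μ(A) = x, μ(B) = y and μ[A ∩ B | A ∪ B] = z if and only if max(x + y − 1, 0) ≤ z ≤ min(x, y)/max(x, y). (These are the lower and upper bounds for the conclusion A||B of two-premise biconditional centering from premises A and B.) -/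
open MeasureTheory ProbabilityTheory

/-- Lower and upper bounds for the conclusion `A||B` of two-premise biconditional
centering: for `x, y ∈ [0,1]` with `max x y > 0`, a probability space with
`μ(A) = x`, `μ(B) = y` and `μ[A ∩ B | A ∪ B] = z` exists iff
`max (x + y - 1) 0 ≤ z ≤ min x y / max x y`. -/
theorem two_premise_biconditional_centering_bounds (x y z : ℝ)
    (hx : x ∈ Set.Icc (0 : ℝ) 1) (hy : y ∈ Set.Icc (0 : ℝ) 1)
    (hmax : 0 < max x y) :
    (∃ (Ω : Type) (_ : MeasurableSpace Ω) (μ : Measure Ω) (_ : IsProbabilityMeasure μ)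
        (A B : Set Ω), MeasurableSet A ∧ MeasurableSet B ∧
        (μ A).toReal = x ∧ (μ B).toReal = y ∧
        ((ProbabilityTheory.cond μ (A ∪ B)) (A ∩ B)).toReal = z) ↔
      (max (x + y - 1) 0 ≤ z ∧ z ≤ min x y / max x y) := by
  obtain ⟨hx0, hx1⟩ := hx
  obtain ⟨hy0, hy1⟩ := hy
  constructor
  · rintro ⟨Ω, mΩ, μ, hμ, A, B, hA, hB, hxA, hyB, hz⟩
    set a := (μ (A ∩ B)).toReal with ha
    set u := (μ (A ∪ B)).toReal with hu
    have hfin : ∀ s : Set Ω, μ s ≠ ⊤ := fun s => measure_ne_top μ s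
    have hux : x ≤ u := by
      rw [← hxA]
      exact ENNReal.toReal_le_toReal (hfin _) (hfin _) |>.mpr
        (measure_mono Set.subset_union_left)
    have huy : y ≤ u := by
      rw [← hyB]
      exact ENNReal.toReal_le_toReal (hfin _) (hfin _) |>.mpr
        (measure_mono Set.subset_union_right)
    have hax : a ≤ x := by
      rw [← hxA]
      exact ENNReal.toReal_le_toReal (hfin _) (hfin _) |>.mpr
        (measure_mono Set.inter_subset_left)
    have hay : a ≤ y := by
      rw [← hyB]
      exact ENNReal.toReal_le_toReal (hfin _) (hfin _) |>.mpr
        (measure_mono Set.inter_subset_right)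
    have ha0 : 0 ≤ a := ENNReal.toReal_nonneg
    have hu1 : u ≤ 1 := by
      have := prob_le_one (μ := μ) (s := A ∪ B)
      have := ENNReal.toReal_le_toReal (hfin _) (by simp) |>.mpr this
      simpa using this
    have hupos : 0 < u := lt_of_lt_of_le hmax (max_le hux huy)
    have hsum : u + a = x + y := by
      rw [← hxA, ← hyB, ha, hu, ← ENNReal.toReal_add (hfin _) (hfin _),
        ← ENNReal.toReal_add (hfin _) (hfin _), measure_union_add_inter A hB]
    have hzau : z = u⁻¹ * a := by
      rw [← hz, cond_apply (hA.union hB) μ,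
        Set.inter_eq_right.mpr (Set.inter_subset_left.trans Set.subset_union_left),
        ENNReal.toReal_mul, ENNReal.toReal_inv]
    have hzu : z * u = a := by
      rw [hzau]; field_simp
    have hz0 : 0 ≤ z := by
      rw [hzau]; positivity
    constructor
    · refine max_le ?_ hz0
      nlinarith [mul_nonneg hz0 (sub_nonneg.mpr hu1)]
    · calc z = a / u := by rw [hzau]; ring
        _ ≤ min x y / max x y :=
          div_le_div₀ (le_min (ha0.trans hax) (ha0.trans hay)) (le_min hax hay)
            hmax (max_le hux huy)
  · rintro ⟨h1, h2⟩
    have hz0 : 0 ≤ z := le_trans (le_max_right _ _) h1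
    have hz1 : x + y - 1 ≤ z := le_trans (le_max_left _ _) h1
    have hzM : z * max x y ≤ min x y := (le_div_iff₀ hmax).mp h2
    have hs0 : 0 < x + y := by
      rcases max_cases x y with ⟨h, _⟩ | ⟨h, _⟩ <;> nlinarith
    have h1z : (0:ℝ) < 1 + z := by linarith
    set a := z * (x + y) / (1 + z) with ha
    have hzy : z * y ≤ x := by
      nlinarith [mul_le_mul_of_nonneg_left (le_max_right x y) hz0, min_le_left x y]
    have hzx : z * x ≤ y := by
      nlinarith [mul_le_mul_of_nonneg_left (le_max_left x y) hz0, min_le_right x y]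
    have hax : a ≤ x := by
      rw [ha, div_le_iff₀ h1z]; nlinarith
    have hay : a ≤ y := by
      rw [ha, div_le_iff₀ h1z]; nlinarith
    have ha0 : 0 ≤ a := by positivity
    have haxy : x + y - 1 ≤ a := by
      rw [ha, le_div_iff₀ h1z]; nlinarith
    have hu1 : x - a + y ≤ 1 := by linarith
    have hupos : 0 < x - a + y := by
      rcases max_cases x y with ⟨h, _⟩ | ⟨h, _⟩ <;> nlinarith [min_le_left x y, min_le_right x y]
    have key : a * (1 + z) = z * (x + y) := by
      rw [ha]; field_simp
    have haz : a = z * (x - a + y) := by linear_combination key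
    -- construction
    refine ⟨ℝ, inferInstance, volume.restrict (Set.Icc (0:ℝ) 1), ⟨by simp⟩,
      Set.Ioc 0 x, Set.Ioc (x - a) (x - a + y), measurableSet_Ioc, measurableSet_Ioc,
      ?_, ?_, ?_⟩
    · rw [Measure.restrict_apply measurableSet_Ioc,
        Set.inter_eq_left.mpr (Set.Ioc_subset_Icc_self.trans (Set.Icc_subset_Icc le_rfl hx1)),
        Real.volume_Ioc]
      simp [hx0]
    · rw [Measure.restrict_apply measurableSet_Ioc,
        Set.inter_eq_left.mpr (Set.Ioc_subset_Icc_self.trans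
          (Set.Icc_subset_Icc (by linarith) hu1)),
        Real.volume_Ioc]
      simp [hy0]
    · have hunion : Set.Ioc (0:ℝ) x ∪ Set.Ioc (x - a) (x - a + y) = Set.Ioc 0 (x - a + y) := by
        rw [Set.Ioc_union_Ioc
          (le_trans (min_le_left _ _) (le_max_of_le_right (by linarith)))
          (le_trans (min_le_left _ _) (le_max_of_le_right (by linarith)))]
        rw [min_eq_left (by linarith), max_eq_right (by linarith)]
      have hinter : Set.Ioc (0:ℝ) x ∩ Set.Ioc (x - a) (x - a + y) = Set.Ioc (x - a) x := by
        rw [Set.Ioc_inter_Ioc, max_eq_right (by linarith), min_eq_left (by linarith)]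
      rw [cond_apply (measurableSet_Ioc.union measurableSet_Ioc),
        Set.inter_eq_right.mpr (Set.inter_subset_left.trans Set.subset_union_left),
        hunion, hinter,
        Measure.restrict_apply measurableSet_Ioc,
        Set.inter_eq_left.mpr (Set.Ioc_subset_Icc_self.trans (Set.Icc_subset_Icc le_rfl hu1)),
        Measure.restrict_apply measurableSet_Ioc,
        Set.inter_eq_left.mpr (Set.Ioc_subset_Icc_self.trans
          (Set.Icc_subset_Icc (by linarith) hx1)),
        Real.volume_Ioc, Real.volume_Ioc, ENNReal.toReal_mul, ENNReal.toReal_inv,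
        ENNReal.toReal_ofReal (by linarith), ENNReal.toReal_ofReal (by linarith)]
      rw [sub_zero, show x - (x - a) = a by ring]
      rw [inv_mul_eq_div, div_eq_iff (ne_of_gt hupos)]
      linear_combination haz
end
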